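/- In the block edge_pushing algorithm, at the end of the iteration at which node i is swept, the nonnull elements of the matrix W lie in the upper-left diagonal block of size n + i − 1; i.e., w_{jk} = 0 whenever j ≥ i or k ≥ i. -/

import Mathlib

/-!
Sweeping node `i` (index `N = n + i - 1`) conjugates `W` by the Jacobian `J` of `Φ_i` and adds
`v̄_i ∇²φ_i`. Since `φ_i` depends only on coordinates below `N`, column `b ≥ N` of `J` is zero for
`b = N` and the unit vector `e_b` for `b > N`; so if `W` vanishes outside the block of indices `≤ N`,
then `Jᵀ W J` vanishes outside the block of indices `< N`. By Schwarz's theorem the Hessian of `φ_i`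
vanishes outside that block as well, and reverse induction on `i` gives the zero pattern.
-/

open Matrix

/-- First partial derivative ∂g/∂x_j. -/
noncomputable def pd {n : ℕ} (g : (Fin n → ℝ) → ℝ) (x : Fin n → ℝ) (j : Fin n) : ℝ :=
  fderiv ℝ g x (Pi.single j 1)

/-- Second partial derivative ∂²g/∂x_j∂x_k. -/
noncomputable def H2 {n : ℕ} (g : (Fin n → ℝ) → ℝ) (x : Fin n → ℝ) (j k : Fin n) : ℝ :=
  fderiv ℝ (fun y => fderiv ℝ g y (Pi.single k 1)) x (Pi.single j 1)

namespace Matrix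

variable {ι R : Type*}

def SupportedOn [Zero R] (W : Matrix ι ι R) (S : Set ι) : Prop :=
  ∀ a b, (a ∉ S ∨ b ∉ S) → W a b = 0

lemma SupportedOn.add [AddZeroClass R] {W V : Matrix ι ι R} {S : Set ι} (hW : W.SupportedOn S)
    (hV : V.SupportedOn S) : (W + V).SupportedOn S := fun a b hab => by
  rw [add_apply, hW a b hab, hV a b hab, add_zero]

lemma SupportedOn.transpose_mul_mul [Fintype ι] [NonUnitalNonAssocSemiring R]
    {W J : Matrix ι ι R} {S T : Set ι} (hW : W.SupportedOn S)
    (hJ : ∀ a b, a ∈ S → b ∉ T → J a b = 0) : (Jᵀ * W * J).SupportedOn T := by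
  have hterm : ∀ a b c d, (a ∉ T ∨ b ∉ T) → J c a * W c d * J d b = 0 := by
    intro a b c d hab
    by_cases hc : c ∈ S
    · by_cases hd : d ∈ S
      · rcases hab with ha | hb
        · rw [hJ c a hc ha, zero_mul, zero_mul]
        · rw [hJ d b hd hb, mul_zero]
      · rw [hW c d (Or.inr hd), mul_zero, zero_mul]
    · rw [hW c d (Or.inl hc), mul_zero, zero_mul]
  intro a b hab
  simp only [mul_apply, transpose_apply, Finset.sum_mul]
  exact Finset.sum_eq_zero fun d _ => Finset.sum_eq_zero fun c _ => hterm a b c d hab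

end Matrix

section PartialDerivatives

variable {m : ℕ} {Φ : (Fin m → ℝ) → Fin m → ℝ} {φ : (Fin m → ℝ) → ℝ} {N : ℕ}

lemma pd_eval (a b : Fin m) (x : Fin m → ℝ) :
    pd (fun w => w a) x b = if a = b then 1 else 0 := by
  simp [pd, fderiv_apply, Pi.single_apply]

lemma H2_eval (a j k : Fin m) (x : Fin m → ℝ) : H2 (fun w => w a) x j k = 0 := by
  simp [H2, fderiv_apply]

lemma H2_eq_fderiv_fderiv {g : (Fin m → ℝ) → ℝ} {x : Fin m → ℝ}
    (hg : DifferentiableAt ℝ (fderiv ℝ g) x) (j k : Fin m) :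
    H2 g x j k = fderiv ℝ (fderiv ℝ g) x (Pi.single j 1) (Pi.single k 1) := by
  simp [H2, fderiv_clm_apply hg (differentiableAt_const _)]

lemma H2_comm {g : (Fin m → ℝ) → ℝ} {x : Fin m → ℝ} (hg : ContDiffAt ℝ 2 g x) (j k : Fin m) :
    H2 g x j k = H2 g x k j := by
  have hg' := (hg.fderiv_right (m := 1) le_rfl).differentiableAt one_ne_zero
  rw [H2_eq_fderiv_fderiv hg', H2_eq_fderiv_fderiv hg']
  exact hg.isSymmSndFDerivAt (by simp) _ _

lemma H2_eq_zero_of_pd_eq_zero {g : (Fin m → ℝ) → ℝ} {k : Fin m} (hk : ∀ y, pd g y k = 0)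
    (x : Fin m → ℝ) (j : Fin m) : H2 g x j k = 0 := by
  simp [H2, show (fun y => fderiv ℝ g y (Pi.single k 1)) = 0 from funext hk]

lemma pd_update_eq_zero (hΦ : ∀ w a, Φ w a = if (a : ℕ) = N then φ w else w a)
    (hφ : ∀ j : Fin m, N ≤ (j : ℕ) → ∀ w, pd φ w j = 0) (x : Fin m → ℝ) {a b : Fin m}
    (ha : (a : ℕ) < N + 1) (hb : N ≤ (b : ℕ)) : pd (fun w => Φ w a) x b = 0 := by
  simp_rw [hΦ]
  split_ifs with haN
  · exact hφ b hb x
  · rw [pd_eval, if_neg (by omega)]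

/-- Independence of `φ` from `x_j` kills column `j` of its Hessian, and symmetry then kills row `j`. -/
lemma H2_update_eq_zero (hΦ : ∀ w a, Φ w a = if (a : ℕ) = N then φ w else w a)
    (hφ : ∀ j : Fin m, N ≤ (j : ℕ) → ∀ w, pd φ w j = 0) {x : Fin m → ℝ}
    (hφx : ContDiffAt ℝ 2 φ x) (a : Fin m) {j k : Fin m} (hjk : N ≤ (j : ℕ) ∨ N ≤ (k : ℕ)) :
    H2 (fun w => Φ w a) x j k = 0 := by
  simp_rw [hΦ]
  split_ifs
  · rcases hjk with hj | hk
    · rw [H2_comm hφx]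
      exact H2_eq_zero_of_pd_eq_zero (hφ j hj) x k
    · exact H2_eq_zero_of_pd_eq_zero (hφ k hk) x j
  · exact H2_eval a j k x

end PartialDerivatives

/-- `Φ t` is the paper's `Φ_{t+1}`, sweeping the node of index `n + t`; `Wseq s` is `W` after
`s` iterations, i.e. at the end of the sweep of the paper's node `ℓ - s + 1`. -/
theorem edge_pushing_zero_pattern_general (n ℓ : ℕ)
    (Φ : ℕ → (Fin (n+ℓ) → ℝ) → (Fin (n+ℓ) → ℝ))
    (φ : ℕ → (Fin (n+ℓ) → ℝ) → ℝ)
    (hφC : ∀ t, t < ℓ → ContDiff ℝ 2 (φ t))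
    (hstruct : ∀ t, t < ℓ → ∀ w a, Φ t w a = if (a : ℕ) = n + t then φ t w else w a)
    (hdep : ∀ t, t < ℓ → ∀ m : Fin (n+ℓ), n + t ≤ (m : ℕ) →
      ∀ w, fderiv ℝ (φ t) w (Pi.single m 1) = 0)
    (x : Fin n → ℝ)
    (Z : ℕ → (Fin n → ℝ) → (Fin (n+ℓ) → ℝ))
    (vbar : ℕ → Fin (n+ℓ) → ℝ)
    (Jac : ℕ → Matrix (Fin (n+ℓ)) (Fin (n+ℓ)) ℝ)
    (hJac : ∀ t a b, Jac t a b = pd (fun w => Φ t w a) (Z t x) b)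
    (Hterm : ℕ → Matrix (Fin (n+ℓ)) (Fin (n+ℓ)) ℝ)
    (hHterm : ∀ t j k, Hterm t j k
      = ∑ a, vbar (t+1) a * H2 (fun w => Φ t w a) (Z t x) j k)
    (Wseq : ℕ → Matrix (Fin (n+ℓ)) (Fin (n+ℓ)) ℝ)
    (hW0 : Wseq 0 = 0)
    (hWs : ∀ s, s < ℓ → Wseq (s+1)
      = (Jac (ℓ - s - 1))ᵀ * Wseq s * Jac (ℓ - s - 1) + Hterm (ℓ - s - 1)) :
    ∀ s, s ≤ ℓ → ∀ a b : Fin (n+ℓ),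
      (n + (ℓ - s) ≤ (a : ℕ) ∨ n + (ℓ - s) ≤ (b : ℕ)) → Wseq s a b = 0 := by
  have hstep : ∀ s < ℓ, (Wseq s).SupportedOn {a | (a : ℕ) < n + (ℓ - s)} →
      (Wseq (s + 1)).SupportedOn {a | (a : ℕ) < n + (ℓ - (s + 1))} := by
    intro s hs hW
    have ht : ℓ - s - 1 < ℓ := by omega
    have hN : n + (ℓ - s) = n + (ℓ - s - 1) + 1 := by omega
    rw [hWs s hs, show ℓ - (s + 1) = ℓ - s - 1 by omega]
    refine (hW.transpose_mul_mul fun a b ha hb => ?_).add fun j k hjk => ?_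
    · rw [hJac]
      exact pd_update_eq_zero (hstruct _ ht) (hdep _ ht) _ (hN ▸ ha) (not_lt.1 hb)
    · rw [hHterm]
      refine Finset.sum_eq_zero fun c _ => ?_
      rw [H2_update_eq_zero (hstruct _ ht) (hdep _ ht) (hφC _ ht).contDiffAt c
        (hjk.imp not_lt.1 not_lt.1), mul_zero]
  have hsupp : ∀ s ≤ ℓ, (Wseq s).SupportedOn {a | (a : ℕ) < n + (ℓ - s)} := by
    intro s hs
    induction s with
    | zero => simp [hW0, Matrix.SupportedOn]
    | succ s ih => exact hstep s hs (ih (Nat.le_of_succ_le hs))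
  intro s hs a b hab
  exact hsupp s hs a b (hab.imp not_lt.2 not_lt.2)

/-- zero-pattern invariant of block edge_pushing.  The state
transformation `Φ t` (the paper's Φ_{t+1}, sweeping node of index n+t) replaces
only coordinate n+t, and its elemental function φ t depends only on coordinates
of index < n+t.  After s iterations (i.e., at the end of the iteration sweeping
the paper's node i = ℓ-s+1, of index n+ℓ-s), all nonzero entries of Wseq s lie
in the upper-left block of indices < n + (ℓ - s). -/
theorem edge_pushing_zero_pattern (n ℓ : ℕ) (hℓ : 0 < ℓ)
    (Φ : ℕ → (Fin (n+ℓ) → ℝ) → (Fin (n+ℓ) → ℝ))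
    (φ : ℕ → (Fin (n+ℓ) → ℝ) → ℝ)
    (hφC : ∀ t, t < ℓ → ContDiff ℝ 2 (φ t))
    (hstruct : ∀ t, t < ℓ → ∀ w a, Φ t w a = if (a : ℕ) = n + t then φ t w else w a)
    (hdep : ∀ t, t < ℓ → ∀ m : Fin (n+ℓ), n + t ≤ (m : ℕ) →
      ∀ w, fderiv ℝ (φ t) w (Pi.single m 1) = 0)
    (lastIdx : Fin (n+ℓ)) (hlast : (lastIdx : ℕ) = n + ℓ - 1)
    (x : Fin n → ℝ)
    (Z : ℕ → (Fin n → ℝ) → (Fin (n+ℓ) → ℝ))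
    (hZ0 : ∀ x t, Z 0 x t = if h : (t : ℕ) < n then x ⟨t, h⟩ else 0)
    (hZs : ∀ i x, Z (i+1) x = Φ i (Z i x))
    (vbar : ℕ → Fin (n+ℓ) → ℝ)
    (hvℓ : vbar ℓ = Pi.single lastIdx 1)
    (hvs : ∀ t, t < ℓ → ∀ j,
      vbar t j = ∑ a, vbar (t+1) a * pd (fun w => Φ t w a) (Z t x) j)
    (Jac : ℕ → Matrix (Fin (n+ℓ)) (Fin (n+ℓ)) ℝ)
    (hJac : ∀ t a b, Jac t a b = pd (fun w => Φ t w a) (Z t x) b)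
    (Hterm : ℕ → Matrix (Fin (n+ℓ)) (Fin (n+ℓ)) ℝ)
    (hHterm : ∀ t j k, Hterm t j k
      = ∑ a, vbar (t+1) a * H2 (fun w => Φ t w a) (Z t x) j k)
    (Wseq : ℕ → Matrix (Fin (n+ℓ)) (Fin (n+ℓ)) ℝ)
    (hW0 : Wseq 0 = 0)
    (hWs : ∀ s, s < ℓ → Wseq (s+1)
      = (Jac (ℓ - s - 1))ᵀ * Wseq s * Jac (ℓ - s - 1) + Hterm (ℓ - s - 1)) :
    ∀ s, s ≤ ℓ → ∀ a b : Fin (n+ℓ),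
      (n + (ℓ - s) ≤ (a : ℕ) ∨ n + (ℓ - s) ≤ (b : ℕ)) → Wseq s a b = 0 :=
  edge_pushing_zero_pattern_general n ℓ Φ φ hφC hstruct hdep x Z vbar Jac hJac Hterm hHterm Wseq hW0
    hWs
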